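/- Under a special Lorentz boost, a sphere of radius R moving with constant velocity v in the unprimed frame corresponds, at fixed primed time, to an ellipsoid whose volume satisfies vol(E_{t'}) = l³/(α(1 - Vv¹/c²)) · vol(B_t). -/

import Mathlib

/-! At fixed primed time `t'` the inverse boost recovers the event `(r, t)` from `y` by an
affine formula, and `r - t v` depends affinely on `y`, with linear part a lower-triangular
matrix of determinant `α (1 - V v¹/c²) / l³` (the factor `α` comes from the cancellation
`α² (1 - V²/c²) = 1`). Hence `E_{t'}` is the preimage of the ball `B_{t'/(lα)}` under an affine
map, and Lebesgue measure scales by the inverse of that determinant; translation invariance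
makes the volume of `B_t` independent of `t`. -/

open MeasureTheory
open scoped Matrix

noncomputable section

/-- The ball `B_t` of radius `R` centered at `tv`, for a sphere moving with constant
velocity `v` in the unprimed frame. -/
def movingBall (v : Fin 3 → ℝ) (R t : ℝ) : Set (Fin 3 → ℝ) :=
  {r | ∑ i, (r i - t * v i) ^ 2 ≤ R ^ 2}

/-- `E_{t'}`: the set of spatial points `x'` such that `(x', t')` is the image, under the
conformal special Lorentz transformation with velocity `V` and factor `l`, of an event
of the world-tube of the moving ball. -/
def imageEllipsoid (c V l α : ℝ) (v : Fin 3 → ℝ) (R t' : ℝ) : Set (Fin 3 → ℝ) :=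
  {y | ∃ r : Fin 3 → ℝ, ∃ t : ℝ, r ∈ movingBall v R t ∧
    y 0 = l * α * (r 0 - V * t) ∧ y 1 = l * r 1 ∧ y 2 = l * r 2 ∧
    t' = l * α * (t - V * r 0 / c ^ 2)}

theorem mem_movingBall_iff {v r : Fin 3 → ℝ} {R t : ℝ} :
    r ∈ movingBall v R t ↔ ∑ i, (r - t • v) i ^ 2 ≤ R ^ 2 :=
  Iff.rfl

theorem volume_movingBall (v : Fin 3 → ℝ) (R s t : ℝ) :
    volume (movingBall v R s) = volume (movingBall v R t) := by
  have hshift : movingBall v R s = (· + (t - s) • v) ⁻¹' movingBall v R t := by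
    ext r
    simp only [mem_movingBall_iff, Set.mem_preimage, sub_smul]
    congr! 3 with i
    simp only [Pi.add_apply, Pi.sub_apply, Pi.smul_apply]
    ring
  rw [hshift, measure_preimage_add_right]

theorem MeasureTheory.Measure.addHaar_preimage_affineMap {E : Type*} [NormedAddCommGroup E]
    [NormedSpace ℝ E] [MeasurableSpace E] [BorelSpace E] [FiniteDimensional ℝ E]
    (μ : Measure E) [μ.IsAddHaarMeasure] {f : E →ₗ[ℝ] E} (hf : LinearMap.det f ≠ 0)
    (b : E) (s : Set E) :
    μ ((fun y => f (y + b)) ⁻¹' s) = ENNReal.ofReal |(LinearMap.det f)⁻¹| * μ s := by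
  change μ ((· + b) ⁻¹' (f ⁻¹' s)) = _
  rw [measure_preimage_add_right, Measure.addHaar_preimage_linearMap μ hf]

theorem one_sub_mul_div_sq_pos {c V w : ℝ} (hV : |V| < c) (hw : |w| < c) :
    0 < 1 - V * w / c ^ 2 := by
  have hc : 0 < c := (abs_nonneg V).trans_lt hV
  have hVw : V * w < c ^ 2 :=
    calc V * w ≤ |V| * |w| := by rw [← abs_mul]; exact le_abs_self _
      _ < c * c := mul_lt_mul'' hV hw (abs_nonneg V) (abs_nonneg w)
      _ = c ^ 2 := (sq c).symm
  rw [sub_pos, div_lt_one (by positivity)]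
  exact hVw

theorem one_sub_sq_div_sq_pos {c V : ℝ} (hV : |V| < c) : 0 < 1 - V ^ 2 / c ^ 2 := by
  simpa only [sq] using one_sub_mul_div_sq_pos hV hV

def lorentzFactor (V c : ℝ) : ℝ := (Real.sqrt (1 - V ^ 2 / c ^ 2))⁻¹

theorem lorentzFactor_pos {c V : ℝ} (hV : |V| < c) : 0 < lorentzFactor V c :=
  inv_pos.2 (Real.sqrt_pos.2 (one_sub_sq_div_sq_pos hV))

theorem lorentzFactor_sq_mul {c V : ℝ} (hV : |V| < c) :
    lorentzFactor V c ^ 2 * (c ^ 2 - V ^ 2) = c ^ 2 := by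
  have hc : 0 < c := (abs_nonneg V).trans_lt hV
  rw [lorentzFactor, inv_pow, Real.sq_sqrt (one_sub_sq_div_sq_pos hV).le,
    one_sub_div (by positivity), inv_div, div_mul_cancel₀]
  exact (sub_pos.2 (sq_lt_sq' (abs_lt.1 hV).1 (abs_lt.1 hV).2)).ne'

def ellipsoidToBall (c V l α : ℝ) (v : Fin 3 → ℝ) : Matrix (Fin 3) (Fin 3) ℝ :=
  !![(1 - V * v 0 / c ^ 2) * α / l, 0, 0;
     -(V * v 1 / c ^ 2) * α / l, 1 / l, 0;
     -(V * v 2 / c ^ 2) * α / l, 0, 1 / l]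

theorem det_ellipsoidToBall (c V l α : ℝ) (v : Fin 3 → ℝ) :
    (ellipsoidToBall c V l α v).det = (1 - V * v 0 / c ^ 2) * α / l ^ 3 := by
  simp only [ellipsoidToBall, Matrix.det_fin_three, Matrix.of_apply, Matrix.cons_val',
    Matrix.cons_val_zero, Matrix.cons_val_one, Matrix.cons_val_two, Matrix.empty_val',
    Matrix.cons_val_fin_one, Matrix.head_cons, Matrix.tail_cons, Matrix.head_fin_const]
  ring

theorem ellipsoidToBall_mulVec (c V l α : ℝ) (v u : Fin 3 → ℝ) :
    ellipsoidToBall c V l α v *ᵥ u =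
      ![(1 - V * v 0 / c ^ 2) * α / l * u 0,
        -(V * v 1 / c ^ 2) * α / l * u 0 + u 1 / l,
        -(V * v 2 / c ^ 2) * α / l * u 0 + u 2 / l] := by
  ext i
  fin_cases i <;>
    simp only [ellipsoidToBall, Matrix.mulVec, dotProduct, Fin.sum_univ_three, Matrix.of_apply,
      Matrix.cons_val', Matrix.cons_val_fin_one, Matrix.cons_val_zero, Matrix.cons_val_one,
      Matrix.cons_val, Fin.zero_eta, Fin.mk_one, Fin.reduceFinMk] <;>
    ring

theorem ellipsoidToBall_mulVec_sub {c V l α t t' : ℝ} {v r y : Fin 3 → ℝ} (hc : c ≠ 0)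
    (hl : l ≠ 0) (hα : α ≠ 0) (hα2 : α ^ 2 * (c ^ 2 - V ^ 2) = c ^ 2)
    (hy0 : y 0 = l * α * (r 0 - V * t)) (hy1 : y 1 = l * r 1) (hy2 : y 2 = l * r 2)
    (ht' : t' = l * α * (t - V * r 0 / c ^ 2)) :
    ellipsoidToBall c V l α v *ᵥ (y + ![V * t', 0, 0]) - (t' / (l * α)) • v = r - t • v := by
  subst ht'
  rw [ellipsoidToBall_mulVec]
  ext i
  fin_cases i <;>
    simp only [Fin.zero_eta, Fin.mk_one, Fin.reduceFinMk, Pi.sub_apply, Pi.add_apply,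
      Pi.smul_apply, smul_eq_mul, Matrix.cons_val, add_zero, hy0, hy1, hy2] <;>
    field_simp
  · linear_combination r 0 * (c ^ 2 - V * v 0) * hα2
  · linear_combination -(r 0 * V * v 1) * hα2
  · linear_combination -(r 0 * V * v 2) * hα2

theorem imageEllipsoid_eq_preimage {c V l α : ℝ} (hc : c ≠ 0) (hl : l ≠ 0) (hα : α ≠ 0)
    (hα2 : α ^ 2 * (c ^ 2 - V ^ 2) = c ^ 2) (v : Fin 3 → ℝ) (R t' : ℝ) :
    imageEllipsoid c V l α v R t' =
      (fun y => Matrix.toLin' (ellipsoidToBall c V l α v) (y + ![V * t', 0, 0])) ⁻¹'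
        movingBall v R (t' / (l * α)) := by
  ext y
  simp only [imageEllipsoid, Set.mem_ofPred_eq, Set.mem_preimage, Matrix.toLin'_apply]
  constructor
  · rintro ⟨r, t, hr, hy0, hy1, hy2, ht'⟩
    rwa [mem_movingBall_iff, ellipsoidToBall_mulVec_sub hc hl hα hα2 hy0 hy1 hy2 ht']
  · intro hy
    -- `(r, t)` is the preimage of `(y, t')` under the boost
    set r : Fin 3 → ℝ := ![α * (y 0 + V * t') / l, y 1 / l, y 2 / l]
    set t := t' / (l * α) + V * r 0 / c ^ 2
    have hy0 : y 0 = l * α * (r 0 - V * t) := by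
      simp only [r, t, Matrix.cons_val_zero]
      field_simp
      linear_combination -(y 0 + V * t') * hα2
    have hy1 : y 1 = l * r 1 := by
      simp only [r, Matrix.cons_val_one, Matrix.cons_val_zero]; field_simp
    have hy2 : y 2 = l * r 2 := by
      simp only [r, Matrix.cons_val_two, Matrix.tail_cons, Matrix.head_cons]; field_simp
    have ht' : t' = l * α * (t - V * r 0 / c ^ 2) := by simp only [t]; field_simp; ring
    refine ⟨r, t, ?_, hy0, hy1, hy2, ht'⟩
    rwa [mem_movingBall_iff, ← ellipsoidToBall_mulVec_sub hc hl hα hα2 hy0 hy1 hy2 ht']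

theorem ellipsoid_volume_general
    (c V l α : ℝ) (hc : 0 < c) (hV : |V| < c) (hl : 0 < l)
    (hα : α = (Real.sqrt (1 - V ^ 2 / c ^ 2))⁻¹)
    (v : Fin 3 → ℝ) (hv : ∑ i, v i ^ 2 < c ^ 2) (R : ℝ) :
    ∀ t' t : ℝ,
      volume (imageEllipsoid c V l α v R t') =
        ENNReal.ofReal (l ^ 3 / (α * (1 - V * v 0 / c ^ 2))) *
          volume (movingBall v R t) := by
  intro t' t
  have hα_pos : 0 < α := hα ▸ lorentzFactor_pos hV
  have hα2 : α ^ 2 * (c ^ 2 - V ^ 2) = c ^ 2 := hα ▸ lorentzFactor_sq_mul hV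
  have hv0 : |v 0| < c := abs_lt_of_sq_lt_sq
    ((Finset.single_le_sum (fun i _ => sq_nonneg (v i)) (Finset.mem_univ 0)).trans_lt hv) hc.le
  have hk : 0 < 1 - V * v 0 / c ^ 2 := one_sub_mul_div_sq_pos hV hv0
  have hdet : (Matrix.toLin' (ellipsoidToBall c V l α v)).det ≠ 0 := by
    rw [LinearMap.det_toLin', det_ellipsoidToBall]; positivity
  rw [imageEllipsoid_eq_preimage hc.ne' hl.ne' hα_pos.ne' hα2,
    Measure.addHaar_preimage_affineMap volume hdet, LinearMap.det_toLin', det_ellipsoidToBall,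
    volume_movingBall v R _ t, abs_of_pos (by positivity)]
  congr 2
  field_simp

/-- Under a special Lorentz boost, a sphere of radius `R` moving with
constant velocity `v` in the unprimed frame corresponds, at fixed primed time `t'`, to
an ellipsoid whose volume satisfies
`vol(E_{t'}) = l³/(α(1 - Vv¹/c²)) · vol(B_t)`. -/
theorem ellipsoid_volume
    (c V l α : ℝ) (hc : 0 < c) (hV : |V| < c) (hl : 0 < l)
    (hα : α = (Real.sqrt (1 - V ^ 2 / c ^ 2))⁻¹)
    (v : Fin 3 → ℝ) (hv : ∑ i, v i ^ 2 < c ^ 2) (R : ℝ) (hR : 0 < R) :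
    ∀ t' t : ℝ,
      volume (imageEllipsoid c V l α v R t') =
        ENNReal.ofReal (l ^ 3 / (α * (1 - V * v 0 / c ^ 2))) *
          volume (movingBall v R t) :=
  ellipsoid_volume_general c V l α hc hV hl hα v hv R
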